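/- There exists a family of polynomials g(P,F) ∈ ℤ[q], one for each pair consisting of a convex polytope P and a face F of P, such that for every convex polytope P and every face F of P one has Σ_{F ≤ E ≤ P} g(E,F)·g(P/E) = g(P), where the sum runs over all faces E of P with F ≤ E ≤ P (with the convention g(P/P) = 1). -/

import Mathlib

open Polynomial
open scoped Classical

noncomputable section

/-- `P ⊆ ℝ^d` is a (convex) polytope: the convex hull of a finite set of points. -/
def IsPolytope {d : ℕ} (P : Set (Fin d → ℝ)) : Prop :=
  ∃ S : Finset (Fin d → ℝ), P = convexHull ℝ (S : Set (Fin d → ℝ))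

/-- `F` is a face of `P`: the empty set, `P` itself, or the intersection of `P`
with a supporting hyperplane. -/
def IsFace {d : ℕ} (P F : Set (Fin d → ℝ)) : Prop :=
  F = ∅ ∨ F = P ∨ ∃ (f : (Fin d → ℝ) →ₗ[ℝ] ℝ) (c : ℝ),
    (∀ x ∈ P, f x ≤ c) ∧ F = {x ∈ P | f x = c}

/-- Affine dimension of a subset of `ℝ^d`, with `pdim ∅ = -1`. -/
def pdim {d : ℕ} (P : Set (Fin d → ℝ)) : ℤ :=
  if P = ∅ then -1 else (Module.finrank ℝ (affineSpan ℝ P).direction : ℤ)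

/-- The pair of functions `g`, `h` satisfies the defining recursion of the
`g`- and `h`-polynomials of polytopes. -/
def IsGH {d : ℕ} (g h : Set (Fin d → ℝ) → Polynomial ℤ) : Prop :=
  g ∅ = 1 ∧
  (∀ P : Set (Fin d → ℝ), IsPolytope P →
      h P = ∑ᶠ F ∈ {F : Set (Fin d → ℝ) | IsFace P F ∧ F ≠ P},
        (X - 1 : Polynomial ℤ) ^ (pdim P - pdim F - 1).toNat * g F) ∧
  (∀ P : Set (Fin d → ℝ), IsPolytope P → P ≠ ∅ →
      (g P).coeff 0 = (h P).coeff 0 ∧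
      (∀ i : ℕ, 0 < i → 2 * (i : ℤ) ≤ pdim P →
        (g P).coeff i = (h P).coeff i - (h P).coeff (i - 1)) ∧
      (∀ i : ℕ, 0 < i → ¬(2 * (i : ℤ) ≤ pdim P) → (g P).coeff i = 0))

/-- `Q` is (a combinatorial model of) the quotient polytope `P/E`, with `ψ` an
explicit isomorphism from the interval `[E, P]` in the face poset of `P` to the
face poset of `Q`. -/
def IsQuotientPair {d : ℕ} (P E Q : Set (Fin d → ℝ))
    (ψ : Set (Fin d → ℝ) → Set (Fin d → ℝ)) : Prop :=
  IsPolytope Q ∧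
  Set.BijOn ψ {G : Set (Fin d → ℝ) | IsFace P G ∧ E ⊆ G} {G : Set (Fin d → ℝ) | IsFace Q G} ∧
  ∀ G₁ ∈ {G : Set (Fin d → ℝ) | IsFace P G ∧ E ⊆ G},
    ∀ G₂ ∈ {G : Set (Fin d → ℝ) | IsFace P G ∧ E ⊆ G}, (G₁ ⊆ G₂ ↔ ψ G₁ ⊆ ψ G₂)

/-- The family `gr` of relative `g`-polynomials satisfies the defining relation
`∑_{F ≤ E ≤ P} g(E,F) g(P/E) = g(P)` (where `g(P/P) = 1`, the quotient by `P`
itself being the empty polytope). -/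
def IsRelG {d : ℕ} (g : Set (Fin d → ℝ) → Polynomial ℤ)
    (gr : Set (Fin d → ℝ) → Set (Fin d → ℝ) → Polynomial ℤ) : Prop :=
  ∀ (P F : Set (Fin d → ℝ)) (Q : Set (Fin d → ℝ) → Set (Fin d → ℝ))
    (ψ : Set (Fin d → ℝ) → Set (Fin d → ℝ) → Set (Fin d → ℝ)),
    IsPolytope P → IsFace P F →
    (∀ E, IsFace P E → F ⊆ E → IsQuotientPair P E (Q E) (ψ E)) →
    (∑ᶠ E ∈ {E : Set (Fin d → ℝ) | IsFace P E ∧ F ⊆ E}, gr E F * g (Q E)) = g P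

/-- A rational polytope: the convex hull of finitely many points with rational
coordinates. -/
def IsRationalPolytope {d : ℕ} (P : Set (Fin d → ℝ)) : Prop :=
  ∃ S : Finset (Fin d → ℝ), (∀ v ∈ S, ∀ i : Fin d, ∃ q : ℚ, v i = (q : ℝ)) ∧
    P = convexHull ℝ (S : Set (Fin d → ℝ))

/-!
The polynomial `g(P)` depends only on the face poset of `P`. This is proved by induction along
proper faces: an order isomorphism of face posets restricts to the face posets of faces, and it
preserves dimension, because every nonempty polytope has a facet of codimension one, so that
`dim P` is one more than the largest dimension of a proper face. Hence `g(P/E)` is a well-defined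
function of `P` and `E`, and, since `g(P/P) = g(∅) = 1`, the defining relation can be solved for
its top term `g(P,F)` by recursion on the dimension of `P`.
-/

open Set Module Filter Topology

def IsOrderIsoOn {α β : Type*} [LE α] [LE β] (φ : α → β) (A : Set α) (B : Set β) : Prop :=
  BijOn φ A B ∧ ∀ a ∈ A, ∀ b ∈ A, (a ≤ b ↔ φ a ≤ φ b)

namespace IsOrderIsoOn

variable {α β γ : Type*} {φ : α → β} {A : Set α} {B : Set β} {a : α} {b : β}

theorem comp [LE α] [LE β] [LE γ] {ψ : β → γ} {C : Set γ} (hψ : IsOrderIsoOn ψ B C)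
    (hφ : IsOrderIsoOn φ A B) : IsOrderIsoOn (ψ ∘ φ) A C :=
  ⟨hψ.1.comp hφ.1, fun a ha b hb =>
    (hφ.2 a ha b hb).trans (hψ.2 _ (hφ.1.mapsTo ha) _ (hφ.1.mapsTo hb))⟩

theorem invFunOn [LE α] [LE β] [Nonempty α] (hφ : IsOrderIsoOn φ A B) :
    IsOrderIsoOn (Function.invFunOn φ A) B A := by
  have hinv := hφ.1.invOn_invFunOn
  refine ⟨hφ.1.symm hinv.symm, fun x hx y hy => ?_⟩
  have hmaps := (hφ.1.symm hinv.symm).mapsTo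
  rw [hφ.2 _ (hmaps hx) _ (hmaps hy), hinv.2 hx, hinv.2 hy]

theorem map_isGreatest [LE α] [PartialOrder β] (hφ : IsOrderIsoOn φ A B) (ha : IsGreatest A a)
    (hb : IsGreatest B b) : φ a = b := by
  obtain ⟨a', ha', rfl⟩ := hφ.1.surjOn hb.1
  exact le_antisymm (hb.2 (hφ.1.mapsTo ha.1)) ((hφ.2 a' ha' a ha.1).1 (ha.2 ha'))

theorem map_isLeast [LE α] [PartialOrder β] (hφ : IsOrderIsoOn φ A B) (ha : IsLeast A a)
    (hb : IsLeast B b) : φ a = b := by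
  obtain ⟨a', ha', rfl⟩ := hφ.1.surjOn hb.1
  exact le_antisymm ((hφ.2 a ha.1 a' ha').1 (ha.2 ha')) (hb.2 (hφ.1.mapsTo ha.1))

theorem restrict [LE α] [LE β] (hφ : IsOrderIsoOn φ A B) (ha : a ∈ A) :
    IsOrderIsoOn φ {x ∈ A | x ≤ a} {y ∈ B | y ≤ φ a} := by
  refine ⟨⟨fun x hx => ⟨hφ.1.mapsTo hx.1, (hφ.2 x hx.1 a ha).1 hx.2⟩,
    hφ.1.injOn.mono fun x hx => hx.1, fun y hy => ?_⟩, fun x hx y hy => hφ.2 x hx.1 y hy.1⟩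
  obtain ⟨x, hx, rfl⟩ := hφ.1.surjOn hy.1
  exact ⟨x, ⟨hx, (hφ.2 x hx a ha).2 hy.2⟩, rfl⟩

end IsOrderIsoOn

section Perturbation

variable {ι : Type*} (S : Finset ι) {a b : ι → ℝ}

theorem exists_pos_forall_add_mul_lt (ha : ∀ i ∈ S, a i < 0) :
    ∃ t > 0, ∀ i ∈ S, a i + t * b i < 0 := by
  have hnear : ∀ᶠ t in 𝓝 (0 : ℝ), ∀ i ∈ S, a i + t * b i < 0 := by
    refine (eventually_all_finset S).2 fun i hi => ?_
    have hcont : Continuous fun t : ℝ => a i + t * b i := by fun_prop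
    exact (hcont.tendsto' 0 (a i) (by simp)).eventually (eventually_lt_nhds (ha i hi))
  obtain ⟨t, ht, ht0⟩ := ((hnear.filter_mono nhdsWithin_le_nhds).and self_mem_nhdsWithin).exists
    (f := 𝓝[>] (0 : ℝ))
  exact ⟨t, ht0, ht⟩

/-- The witness is the largest admissible `t`. -/
theorem exists_pos_add_mul_nonpos_and_eq_zero (ha : ∀ i ∈ S, a i ≤ 0)
    (hb : ∀ i ∈ S, a i = 0 → b i ≤ 0) (hpos : ∃ i ∈ S, 0 < b i) :
    ∃ t > 0, (∀ i ∈ S, a i + t * b i ≤ 0) ∧ ∃ i ∈ S, a i < 0 ∧ a i + t * b i = 0 := by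
  set T := S.filter fun i => 0 < b i
  have hT : T.Nonempty := by simpa [T, Finset.filter_nonempty_iff] using hpos
  have haT : ∀ i ∈ T, a i < 0 := fun i hi => by
    obtain ⟨hiS, hbi⟩ := Finset.mem_filter.1 hi
    exact (ha i hiS).lt_of_ne fun h0 => (hb i hiS h0).not_gt hbi
  obtain ⟨j, hjT, hmin⟩ := T.exists_min_image (fun i => -a i / b i) hT
  have hbj : 0 < b j := (Finset.mem_filter.1 hjT).2
  refine ⟨-a j / b j, div_pos (neg_pos.2 (haT j hjT)) hbj, fun i hi => ?_,
    j, (Finset.mem_filter.1 hjT).1, haT j hjT, by field_simp; ring⟩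
  by_cases hbi : 0 < b i
  · have := (le_div_iff₀ hbi).1 (hmin i (Finset.mem_filter.2 ⟨hi, hbi⟩))
    linarith
  · nlinarith [ha i hi, div_pos (neg_pos.2 (haT j hjT)) hbj]

end Perturbation

section LinearAlgebra

variable {E : Type*} [AddCommGroup E] [Module ℝ E]

theorem le_on_convexHull {s : Set E} {f : E →ₗ[ℝ] ℝ} {c : ℝ} (h : ∀ x ∈ s, f x ≤ c) :
    ∀ x ∈ convexHull ℝ s, f x ≤ c :=
  fun _ hx => convexHull_min h (convex_halfSpace_le f.isLinear c) hx

theorem convexHull_sep_eq_convexHull_filter (S : Finset E) {f : E →ₗ[ℝ] ℝ} {c : ℝ}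
    (h : ∀ s ∈ S, f s ≤ c) :
    {x ∈ convexHull ℝ (S : Set E) | f x = c} = convexHull ℝ ↑(S.filter fun s => f s = c) := by
  apply Subset.antisymm
  · rintro x ⟨hx, hfx⟩
    obtain ⟨w, hw0, hw1, rfl⟩ := Finset.mem_convexHull'.1 hx
    have hterm : ∀ y ∈ S, w y * f y = w y * c := by
      refine (Finset.sum_eq_sum_iff_of_le fun y hy =>
        mul_le_mul_of_nonneg_left (h y hy) (hw0 y hy)).1 ?_
      simpa [map_sum, ← Finset.sum_mul, hw1] using hfx
    have hsupp : ∀ y ∈ S, w y ≠ 0 → f y = c := fun y hy hw => mul_left_cancel₀ hw (hterm y hy)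
    refine Finset.mem_convexHull'.2 ⟨w, fun y hy => hw0 y (Finset.mem_filter.1 hy).1, ?_, ?_⟩
    · rw [Finset.sum_filter_of_ne hsupp, hw1]
    · exact Finset.sum_filter_of_ne fun y hy hne => hsupp y hy fun h0 => by simp [h0] at hne
  · refine convexHull_min (fun s hs => ?_)
      ((convex_convexHull ℝ _).inter (convex_hyperplane f.isLinear c))
    obtain ⟨hsS, hfs⟩ := Finset.mem_filter.1 hs
    exact ⟨subset_convexHull ℝ _ hsS, hfs⟩

theorem vectorSpan_le_ker {s : Set E} (f : E →ₗ[ℝ] ℝ) {c : ℝ} (h : ∀ x ∈ s, f x = c) :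
    vectorSpan ℝ s ≤ LinearMap.ker f := by
  rw [vectorSpan_def, Submodule.span_le]
  rintro _ ⟨x, hx, y, hy, rfl⟩
  simp [h x hx, h y hy]

theorem vectorSpan_convexHull (s : Set E) : vectorSpan ℝ (convexHull ℝ s) = vectorSpan ℝ s := by
  rw [← direction_affineSpan, affineSpan_convexHull, direction_affineSpan]

theorem exists_linearMap_eq_on_lt [FiniteDimensional ℝ E] (a : E) (A B : Set E)
    (h : finrank ℝ (vectorSpan ℝ (insert a A)) < finrank ℝ (vectorSpan ℝ B)) :
    ∃ g : E →ₗ[ℝ] ℝ, (∀ x ∈ A, g x = g a) ∧ ∃ y ∈ B, g a < g y := by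
  obtain ⟨u, huB, huA⟩ : ∃ u ∈ vectorSpan ℝ B, u ∉ vectorSpan ℝ (insert a A) := by
    by_contra! hle
    exact h.not_ge (Submodule.finrank_mono hle)
  obtain ⟨g, hgu, hgA⟩ := Submodule.exists_dual_map_eq_bot_of_notMem huA inferInstance
  have hconst : ∀ x ∈ A, g x = g a := fun x hx => by
    have := LinearMap.le_ker_iff_map.2 hgA
      (vsub_mem_vectorSpan ℝ (mem_insert_of_mem a hx) (mem_insert a A))
    simpa [sub_eq_zero] using this
  obtain ⟨y, hyB, hy⟩ : ∃ y ∈ B, g y ≠ g a := by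
    by_contra! hB
    exact hgu (vectorSpan_le_ker g hB huB)
  rcases hy.lt_or_gt with hlt | hgt
  · exact ⟨-g, fun x hx => by simp [hconst x hx], y, hyB, by simpa using hlt⟩
  · exact ⟨g, hconst, y, hyB, hgt⟩

end LinearAlgebra

section Faces

variable {d : ℕ} {S : Finset (Fin d → ℝ)} {P F G : Set (Fin d → ℝ)}

theorem isFace_self : IsFace P P := Or.inr (Or.inl rfl)

theorem isFace_empty : IsFace P ∅ := Or.inl rfl

theorem IsFace.subset (h : IsFace P F) : F ⊆ P := by
  rcases h with rfl | rfl | ⟨f, c, -, rfl⟩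
  exacts [empty_subset _, subset_rfl, sep_subset _ _]

theorem isGreatest_setOf_isFace (P : Set (Fin d → ℝ)) : IsGreatest {G | IsFace P G} P :=
  ⟨isFace_self, fun _ hG => hG.subset⟩

theorem isLeast_setOf_isFace (P : Set (Fin d → ℝ)) : IsLeast {G | IsFace P G} ∅ :=
  ⟨isFace_empty, fun _ _ => empty_subset _⟩

theorem IsFace.exists_supporting (h : IsFace P F) (hFP : F ≠ P) :
    ∃ (f : (Fin d → ℝ) →ₗ[ℝ] ℝ) (c : ℝ), (∀ x ∈ P, f x ≤ c) ∧ F = {x ∈ P | f x = c} := by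
  rcases h with rfl | rfl | h
  · exact ⟨0, 1, fun _ _ => zero_le_one, by simp⟩
  · exact absurd rfl hFP
  · exact h

theorem IsFace.eq_convexHull_filter (h : IsFace (convexHull ℝ (S : Set (Fin d → ℝ))) F) :
    F = convexHull ℝ ↑(S.filter (· ∈ F)) := by
  have hSP : ∀ s ∈ S, s ∈ convexHull ℝ (S : Set (Fin d → ℝ)) := fun s hs =>
    subset_convexHull ℝ _ hs
  rcases eq_or_ne F (convexHull ℝ ↑S) with rfl | hFP
  · rw [Finset.filter_true_of_mem hSP]
  obtain ⟨f, c, hf, hFeq⟩ := h.exists_supporting hFP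
  have hvert : S.filter (fun s => f s = c) = S.filter (· ∈ F) :=
    Finset.filter_congr fun s hs => by rw [hFeq]; exact ⟨fun hfs => ⟨hSP s hs, hfs⟩, And.right⟩
  conv_lhs => rw [hFeq, convexHull_sep_eq_convexHull_filter S fun s hs => hf s (hSP s hs), hvert]

theorem IsFace.isPolytope (hP : IsPolytope P) (h : IsFace P F) : IsPolytope F := by
  obtain ⟨S, rfl⟩ := hP
  exact ⟨_, h.eq_convexHull_filter⟩

theorem IsPolytope.finite_setOf_isFace (hP : IsPolytope P) : {F | IsFace P F}.Finite := by
  obtain ⟨S, rfl⟩ := hP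
  refine (S.powerset.finite_toSet.image fun T : Finset (Fin d → ℝ) =>
    convexHull ℝ (T : Set (Fin d → ℝ))).subset fun F hF => ?_
  exact ⟨_, Finset.mem_powerset.2 (Finset.filter_subset _ S), hF.eq_convexHull_filter.symm⟩

theorem IsFace.exists_mem_notMem (h : IsFace (convexHull ℝ (S : Set (Fin d → ℝ))) F)
    (hFP : F ≠ convexHull ℝ ↑S) : ∃ s ∈ S, s ∉ F := by
  by_contra! hS
  refine hFP (h.subset.antisymm (convexHull_min hS ?_))
  rw [h.eq_convexHull_filter]
  exact convex_convexHull ℝ _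

theorem IsFace.isFace_of_subset (hG : IsFace P G) (hF : IsFace P F) (hGF : G ⊆ F) :
    IsFace F G := by
  rcases eq_or_ne G F with rfl | hne
  · exact isFace_self
  rcases hG with rfl | rfl | ⟨f, c, hf, rfl⟩
  · exact isFace_empty
  · exact absurd (hF.subset.antisymm hGF) hne.symm
  · exact Or.inr (Or.inr ⟨f, c, fun x hx => hf x (hF.subset hx),
      Subset.antisymm (fun x hx => ⟨hGF hx, hx.2⟩) fun x hx => ⟨hF.subset hx.1, hx.2⟩⟩)

/-- Tilting the functional exposing `F` slightly towards the one exposing `G` within `F`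
exposes `G` within `P`. -/
theorem IsFace.trans (hP : IsPolytope P) (hF : IsFace P F) (hG : IsFace F G) : IsFace P G := by
  rcases eq_or_ne G F with rfl | hGF
  · exact hF
  rcases eq_or_ne F P with rfl | hFP
  · exact hG
  obtain ⟨S, rfl⟩ := hP
  obtain ⟨f, c, hf, rfl⟩ := hF.exists_supporting hFP
  obtain ⟨f', c', hf', rfl⟩ := hG.exists_supporting hGF
  have hfS : ∀ s ∈ S, f s ≤ c := fun s hs => hf s (subset_convexHull ℝ _ hs)
  obtain ⟨t, ht, hlt⟩ := exists_pos_forall_add_mul_lt (S.filter fun s => f s < c)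
    (a := fun s => f s - c) (b := fun s => f' s - c') fun s hs => by
      simpa using (Finset.mem_filter.1 hs).2
  have hvert : ∀ s ∈ S, f s + t * f' s ≤ c + t * c' ∧
      (f s + t * f' s = c + t * c' ↔ f s = c ∧ f' s = c') := by
    intro s hs
    rcases (hfS s hs).lt_or_eq with hfs | hfs
    · have := hlt s (Finset.mem_filter.2 ⟨hs, hfs⟩)
      exact ⟨by linarith, ⟨fun _ => by linarith, fun h => absurd h.1 hfs.ne⟩⟩
    · have := hf' s ⟨subset_convexHull ℝ _ hs, hfs⟩
      exact ⟨by rw [hfs]; nlinarith, ⟨fun h => ⟨hfs, by nlinarith⟩, fun h => by rw [h.1, h.2]⟩⟩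
  refine Or.inr (Or.inr ⟨f + t • f', c + t * c',
    le_on_convexHull fun s hs => by simpa using (hvert s hs).1, ?_⟩)
  rw [convexHull_sep_eq_convexHull_filter S hfS,
    convexHull_sep_eq_convexHull_filter _ fun s hs => hf' s ?_,
    convexHull_sep_eq_convexHull_filter S fun s hs => by simpa using (hvert s hs).1,
    Finset.filter_filter]
  · refine congrArg _ (congrArg _ (Finset.filter_congr fun s hs => ?_))
    simpa using (hvert s hs).2.symm
  · exact ⟨subset_convexHull ℝ _ (Finset.mem_filter.1 hs).1, (Finset.mem_filter.1 hs).2⟩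

theorem setOf_isFace_of_isFace (hP : IsPolytope P) (hG : IsFace P G) :
    {K | IsFace G K} = {K | IsFace P K ∧ K ⊆ G} :=
  ext fun _ => ⟨fun hK => ⟨IsFace.trans hP hG hK, hK.subset⟩,
    fun hK => hK.1.isFace_of_subset hG hK.2⟩

end Faces

section Dimension

variable {d : ℕ} {P F : Set (Fin d → ℝ)}

theorem pdim_empty : pdim (∅ : Set (Fin d → ℝ)) = -1 := if_pos rfl

theorem pdim_of_ne_empty (h : P ≠ ∅) : pdim P = finrank ℝ (vectorSpan ℝ P) := by
  rw [pdim, if_neg h, direction_affineSpan]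

theorem neg_one_le_pdim (P : Set (Fin d → ℝ)) : -1 ≤ pdim P := by
  unfold pdim
  split_ifs <;> omega

theorem finrank_vectorSpan_insert_le_pdim (a : Fin d → ℝ) (F : Set (Fin d → ℝ)) :
    (finrank ℝ (vectorSpan ℝ (insert a F)) : ℤ) ≤ pdim F + 1 := by
  rcases eq_or_ne F ∅ with rfl | hF
  · simp [pdim_empty]
  · rw [pdim_of_ne_empty hF]
    exact_mod_cast finrank_vectorSpan_insert_le_set ℝ F a

theorem IsFace.pdim_lt (hF : IsFace P F) (hFP : F ≠ P) : pdim F < pdim P := by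
  have hP : P ≠ ∅ := by
    rintro rfl
    exact hFP (subset_empty_iff.1 hF.subset)
  rcases eq_or_ne F ∅ with rfl | hF0
  · rw [pdim_empty, pdim_of_ne_empty hP]
    omega
  obtain ⟨f, c, -, hFeq⟩ := hF.exists_supporting hFP
  have hfF : ∀ x ∈ F, f x = c := by
    rw [hFeq]
    exact fun x hx => hx.2
  have hle := vectorSpan_mono ℝ hF.subset
  rw [pdim_of_ne_empty hF0, pdim_of_ne_empty hP, Nat.cast_lt]
  refine (Submodule.finrank_mono hle).lt_of_ne fun hrank => hFP ?_
  obtain ⟨p, hp⟩ := nonempty_iff_ne_empty.2 hF0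
  refine hF.subset.antisymm fun x hx => ?_
  have hxp : x -ᵥ p ∈ vectorSpan ℝ F := by
    rw [Submodule.eq_of_le_of_finrank_eq hle hrank]
    exact vsub_mem_vectorSpan ℝ hx (hF.subset hp)
  have hfx : f x = c := by
    simpa [sub_eq_zero, hfF p hp] using vectorSpan_le_ker f hfF hxp
  rw [hFeq]
  exact ⟨hx, hfx⟩

/-- The hyperplane exposing `F` is rotated, about its intersection with a hyperplane `g = g s₀`
through `F` and a vertex `s₀ ∉ F`, until it meets a new vertex; `s₀` stays strictly on one side,
so the new face is proper. Such a `g` exists as soon as `dim F + 2 ≤ dim P`. -/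
theorem IsFace.exists_isFace_ssuperset (hP : IsPolytope P) (hF : IsFace P F) (hFP : F ≠ P)
    (hdim : pdim F + 2 ≤ pdim P) : ∃ G, IsFace P G ∧ G ≠ P ∧ F ⊂ G := by
  obtain ⟨S, rfl⟩ := hP
  obtain ⟨s₀, hs₀S, hs₀F⟩ := hF.exists_mem_notMem hFP
  obtain ⟨f, c, hf, hFeq⟩ := hF.exists_supporting hFP
  have hSP : ∀ s ∈ S, s ∈ convexHull ℝ (S : Set (Fin d → ℝ)) := fun s hs =>
    subset_convexHull ℝ _ hs
  have hfS : ∀ s ∈ S, f s ≤ c := fun s hs => hf s (hSP s hs)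
  have hmemF : ∀ s ∈ S, s ∈ F ↔ f s = c := fun s hs => by
    rw [hFeq]
    exact ⟨And.right, fun h => ⟨hSP s hs, h⟩⟩
  have hfF : ∀ x ∈ F, f x = c := by
    rw [hFeq]
    exact fun x hx => hx.2
  have hrank : finrank ℝ (vectorSpan ℝ (insert s₀ F)) <
      finrank ℝ (vectorSpan ℝ (S : Set (Fin d → ℝ))) := by
    have hP0 : convexHull ℝ (S : Set (Fin d → ℝ)) ≠ ∅ := fun h => by
      have := neg_one_le_pdim F
      rw [h, pdim_empty] at hdim
      omega
    have := finrank_vectorSpan_insert_le_pdim s₀ F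
    rw [pdim_of_ne_empty hP0, vectorSpan_convexHull] at hdim
    omega
  obtain ⟨g, hgF, s, hsS, hgs⟩ := exists_linearMap_eq_on_lt s₀ F _ hrank
  obtain ⟨t, -, hle, s₁, hs₁S, hs₁, hs₁eq⟩ := exists_pos_add_mul_nonpos_and_eq_zero S
    (a := fun s => f s - c) (b := fun s => g s - g s₀) (fun s hs => by simpa using hfS s hs)
    (fun s hs hfs => by simp [hgF s ((hmemF s hs).2 (by linarith))]) ⟨s, hsS, by simpa using hgs⟩
  have hφ : ∀ x, (f + t • g) x = f x + t * g x := fun x => by simp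
  refine ⟨{x ∈ convexHull ℝ ↑S | (f + t • g) x = c + t * g s₀},
    Or.inr (Or.inr ⟨_, _, le_on_convexHull fun s hs => ?_, rfl⟩), fun hG => ?_,
    (ssubset_iff_of_subset fun x hx => ?_).2 ⟨s₁, ⟨hSP s₁ hs₁S, ?_⟩, ?_⟩⟩
  · linarith [hle s hs, hφ s]
  · have hs₀G := hSP s₀ hs₀S
    rw [← hG] at hs₀G
    exact hs₀F ((hmemF s₀ hs₀S).2 (by linarith [hs₀G.2, hφ s₀]))
  · exact ⟨hF.subset hx, by rw [hφ, hfF x hx, hgF x hx]⟩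
  · linarith [hφ s₁]
  · exact fun h => hs₁.ne (by linarith [hfF s₁ h])

theorem IsPolytope.exists_facet (hP : IsPolytope P) (hP0 : P ≠ ∅) :
    ∃ F, IsFace P F ∧ F ≠ P ∧ pdim F = pdim P - 1 := by
  have hfin : {F | IsFace P F ∧ F ≠ P}.Finite := hP.finite_setOf_isFace.subset fun _ hF => hF.1
  obtain ⟨F, ⟨hF, hFP⟩, hmax⟩ := hfin.exists_maximal ⟨∅, isFace_empty, Ne.symm hP0⟩
  refine ⟨F, hF, hFP, ?_⟩
  by_contra hne
  obtain ⟨G, hG, hGP, hFG⟩ :=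
    hF.exists_isFace_ssuperset hP hFP (by have := hF.pdim_lt hFP; omega)
  exact hFG.2 (hmax ⟨hG, hGP⟩ hFG.1)

theorem face_induction {motive : Set (Fin d → ℝ) → Prop}
    (step : ∀ P, (∀ F, IsFace P F → F ≠ P → motive F) → motive P) (P : Set (Fin d → ℝ)) :
    motive P := by
  induction hn : (pdim P + 1).toNat using Nat.strong_induction_on generalizing P with
  | _ n ih =>
    refine step P fun F hF hFP => ih _ ?_ F rfl
    have := hF.pdim_lt hFP
    have := neg_one_le_pdim F
    omega

end Dimension

section Invariance

variable {d : ℕ} {g h : Set (Fin d → ℝ) → ℤ[X]} {P P' G : Set (Fin d → ℝ)}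
  {φ : Set (Fin d → ℝ) → Set (Fin d → ℝ)}

namespace IsOrderIsoOn

theorem eq_empty_iff (hφ : IsOrderIsoOn φ {G | IsFace P G} {G | IsFace P' G}) :
    P = ∅ ↔ P' = ∅ := by
  have htop := hφ.map_isGreatest (isGreatest_setOf_isFace P) (isGreatest_setOf_isFace P')
  have hbot := hφ.map_isLeast (isLeast_setOf_isFace P) (isLeast_setOf_isFace P')
  refine ⟨fun hP => ?_, fun hP' => hφ.1.injOn isFace_self isFace_empty ?_⟩
  · rw [← htop, hP, hbot]
  · rw [htop, hbot, hP']

theorem bijOn_properFaces (hφ : IsOrderIsoOn φ {G | IsFace P G} {G | IsFace P' G}) :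
    BijOn φ {F | IsFace P F ∧ F ≠ P} {F | IsFace P' F ∧ F ≠ P'} := by
  have := hφ.1.sdiff_singleton (isFace_self (P := P))
  rwa [hφ.map_isGreatest (isGreatest_setOf_isFace P) (isGreatest_setOf_isFace P')] at this

theorem restrict_isFace (hφ : IsOrderIsoOn φ {G | IsFace P G} {G | IsFace P' G})
    (hP : IsPolytope P) (hP' : IsPolytope P') (hG : IsFace P G) :
    IsOrderIsoOn φ {K | IsFace G K} {K | IsFace (φ G) K} := by
  rw [setOf_isFace_of_isFace hP hG, setOf_isFace_of_isFace hP' (hφ.1.mapsTo hG)]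
  exact hφ.restrict hG

end IsOrderIsoOn

theorem pdim_eq_of_isOrderIsoOn (hP : IsPolytope P) (hP' : IsPolytope P')
    (hφ : IsOrderIsoOn φ {G | IsFace P G} {G | IsFace P' G}) : pdim P = pdim P' := by
  induction P using face_induction generalizing P' φ with
  | step P ih =>
  rcases eq_or_ne P ∅ with hP0 | hP0
  · rw [hP0, hφ.eq_empty_iff.1 hP0]
  have hface : ∀ G, IsFace P G → G ≠ P → pdim G = pdim (φ G) := fun G hG hGP =>
    ih G hG hGP (hG.isPolytope hP) ((hφ.1.mapsTo hG).isPolytope hP')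
      (hφ.restrict_isFace hP hP' hG)
  have hproper := hφ.bijOn_properFaces
  obtain ⟨F, hF, hFP, hFdim⟩ := hP.exists_facet hP0
  obtain ⟨F', hF', hF'P', hF'dim⟩ := hP'.exists_facet (mt hφ.eq_empty_iff.2 hP0)
  obtain ⟨G, ⟨hG, hGP⟩, rfl⟩ := hproper.surjOn ⟨hF', hF'P'⟩
  have hlt := (hproper.mapsTo ⟨hF, hFP⟩).1.pdim_lt (hproper.mapsTo ⟨hF, hFP⟩).2
  rw [← hface F hF hFP] at hlt
  rw [← hface G hG hGP] at hF'dim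
  have := hG.pdim_lt hGP
  omega

theorem IsGH.g_eq_of_h_eq (hGH : IsGH g h) (hP : IsPolytope P) (hP' : IsPolytope P')
    (hP0 : P ≠ ∅) (hP'0 : P' ≠ ∅) (hdim : pdim P = pdim P') (hh : h P = h P') : g P = g P' := by
  obtain ⟨hzero, hlow, hhigh⟩ := hGH.2.2 P hP hP0
  obtain ⟨hzero', hlow', hhigh'⟩ := hGH.2.2 P' hP' hP'0
  ext i
  rcases Nat.eq_zero_or_pos i with rfl | hi
  · rw [hzero, hzero', hh]
  by_cases hle : 2 * (i : ℤ) ≤ pdim P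
  · rw [hlow i hi hle, hlow' i hi (hdim ▸ hle), hh]
  · rw [hhigh i hi hle, hhigh' i hi (hdim ▸ hle)]

theorem IsGH.g_eq_of_isOrderIsoOn (hGH : IsGH g h) (hP : IsPolytope P) (hP' : IsPolytope P')
    (hφ : IsOrderIsoOn φ {G | IsFace P G} {G | IsFace P' G}) : g P = g P' := by
  induction P using face_induction generalizing P' φ with
  | step P ih =>
  rcases eq_or_ne P ∅ with hP0 | hP0
  · rw [hP0, hφ.eq_empty_iff.1 hP0]
  have hdim := pdim_eq_of_isOrderIsoOn hP hP' hφ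
  refine hGH.g_eq_of_h_eq hP hP' hP0 (mt hφ.eq_empty_iff.2 hP0) hdim ?_
  rw [hGH.2.1 P hP, hGH.2.1 P' hP']
  refine finsum_mem_eq_of_bijOn φ hφ.bijOn_properFaces fun F ⟨hF, hFP⟩ => ?_
  have hFpoly := hF.isPolytope hP
  have hφFpoly := (hφ.1.mapsTo hF).isPolytope hP'
  have hφF := hφ.restrict_isFace hP hP' hF
  rw [hdim, pdim_eq_of_isOrderIsoOn hFpoly hφFpoly hφF, ih F hF hFP hFpoly hφFpoly hφF]

end Invariance

section Quotient

variable {d : ℕ} {g h : Set (Fin d → ℝ) → ℤ[X]} {P E Q Q₁ Q₂ : Set (Fin d → ℝ)}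
  {ψ ψ₁ ψ₂ : Set (Fin d → ℝ) → Set (Fin d → ℝ)}

theorem IsQuotientPair.isOrderIsoOn (hQ : IsQuotientPair P E Q ψ) :
    IsOrderIsoOn ψ {G | IsFace P G ∧ E ⊆ G} {G | IsFace Q G} :=
  hQ.2

theorem IsQuotientPair.eq_empty_of_self (hQ : IsQuotientPair P P Q ψ) : Q = ∅ := by
  have hP : P ∈ {G | IsFace P G ∧ P ⊆ G} := ⟨isFace_self, subset_rfl⟩
  rw [← hQ.isOrderIsoOn.map_isGreatest ⟨hP, fun _ hG => hG.1.subset⟩ (isGreatest_setOf_isFace Q),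
    hQ.isOrderIsoOn.map_isLeast ⟨hP, fun _ hG => hG.2⟩ (isLeast_setOf_isFace Q)]

theorem IsGH.g_eq_of_isQuotientPair (hGH : IsGH g h) (h₁ : IsQuotientPair P E Q₁ ψ₁)
    (h₂ : IsQuotientPair P E Q₂ ψ₂) : g Q₁ = g Q₂ :=
  hGH.g_eq_of_isOrderIsoOn h₁.1 h₂.1 (h₂.isOrderIsoOn.comp h₁.isOrderIsoOn.invFunOn)

/-- `g(P/E)`, computed on a chosen quotient model (`0` if there is none). -/
def gQuotient (g : Set (Fin d → ℝ) → ℤ[X]) (P E : Set (Fin d → ℝ)) : ℤ[X] :=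
  if hQ : ∃ Q ψ, IsQuotientPair P E Q ψ then g hQ.choose else 0

theorem IsGH.gQuotient_eq (hGH : IsGH g h) (hQ : IsQuotientPair P E Q ψ) :
    gQuotient g P E = g Q := by
  have hex : ∃ Q ψ, IsQuotientPair P E Q ψ := ⟨Q, ψ, hQ⟩
  rw [gQuotient, dif_pos hex]
  exact hGH.g_eq_of_isQuotientPair hex.choose_spec.choose_spec hQ

end Quotient

def relativeG {d : ℕ} (g : Set (Fin d → ℝ) → ℤ[X]) (P F : Set (Fin d → ℝ)) : ℤ[X] :=
  g P - ∑ᶠ E ∈ {E | IsFace P E ∧ F ⊆ E ∧ E ≠ P}, relativeG g E F * gQuotient g P E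
termination_by (pdim P + 1).toNat
decreasing_by
  rename_i hE
  have := hE.1.pdim_lt hE.2.2
  have := neg_one_le_pdim E
  omega

/-- There exists a family of relative `g`-polynomials `g(P,F)`,
one for each pair of a polytope `P` and a face `F` of `P`, satisfying
`∑_{F ≤ E ≤ P} g(E,F)·g(P/E) = g(P)` (with the convention `g(P/P) = 1`). -/
theorem relative_g_exists {d : ℕ} (g h : Set (Fin d → ℝ) → Polynomial ℤ)
    (hGH : IsGH g h) :
    ∃ gr : Set (Fin d → ℝ) → Set (Fin d → ℝ) → Polynomial ℤ, IsRelG g gr := by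
  refine ⟨relativeG g, fun P F Q ψ hP hF hQ => ?_⟩
  have hfin : {E | IsFace P E ∧ F ⊆ E ∧ E ≠ P}.Finite :=
    hP.finite_setOf_isFace.subset fun _ hE => hE.1
  have hsplit : {E | IsFace P E ∧ F ⊆ E} = insert P {E | IsFace P E ∧ F ⊆ E ∧ E ≠ P} := by
    ext E
    by_cases hEP : E = P <;> simp [hEP, isFace_self, hF.subset]
  rw [hsplit, finsum_mem_insert _ (fun hPmem => hPmem.2.2 rfl) hfin,
    (hQ P isFace_self hF.subset).eq_empty_of_self, hGH.1, mul_one, relativeG,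
    finsum_mem_congr rfl fun E hE => by rw [hGH.gQuotient_eq (hQ E hE.1 hE.2.1)]]
  exact sub_add_cancel _ _

end
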